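/- Let g be a nondegenerate symmetric bilinear form on V, let ε ∈ {1, -1}, and let J : V → V be linear with J ∘ J = -id_V and g(J X, J Y) = ε g(X, Y) for all X, Y ∈ V; set ω(X, Y) := g(J X, Y). Then (𝒥_{ε,J}, 𝒥_g, 𝒥_ω) is a generalized almost hypercomplex structure on E: each of 𝒥_{ε,J}, 𝒥_g, 𝒥_ω squares to -id_E, they pairwise anti-commute (𝒥_i ∘ 𝒥_j = -𝒥_j ∘ 𝒥_i for i ≠ j), and 𝒥_ω = 𝒥_g ∘ 𝒥_{ε,J}. -/

import Mathlib

/-!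
The compatibility `g(JX, JY) = ε g(X, Y)` says exactly that `♭_g ∘ J = -ε J* ∘ ♭_g`; since
`ε² = 1` this inverts to `♯_g ∘ J* = -ε J ∘ ♯_g`, and `♭_ω = ♭_g ∘ J` gives `♯_ω = -J ∘ ♯_g`.
The same intertwining holds for `ω`, because `♭_ω (J X) = ♭_g (J (J X))`. With these identities
each relation is a componentwise computation on `V × V*`.
-/

noncomputable section

variable {V : Type*} [AddCommGroup V] [Module ℝ V] [FiniteDimensional ℝ V]

/-- The endomorphism `𝒥_{λ,J}` of `E = V × V*`, `𝒥_{λ,J}(X,ξ) = (J X, λ J* ξ)`. -/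
def Jlam (lam : ℝ) (J : V →ₗ[ℝ] V) (u : V × Module.Dual ℝ V) : V × Module.Dual ℝ V :=
  (J u.1, lam • J.dualMap u.2)

/-- The musical isomorphism `♯_h = (♭_h)⁻¹` of a nondegenerate bilinear form `h`. -/
def sharp (h : LinearMap.BilinForm ℝ V) (hh : LinearMap.BilinForm.Nondegenerate h) :
    Module.Dual ℝ V →ₗ[ℝ] V :=
  (LinearMap.BilinForm.toDual h hh).symm

/-- The endomorphism `𝒥_h` of `E = V × V*`, `𝒥_h(X,ξ) = (-♯_h ξ, ♭_h X)`. -/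
def Jform (h : LinearMap.BilinForm ℝ V) (hh : LinearMap.BilinForm.Nondegenerate h)
    (u : V × Module.Dual ℝ V) : V × Module.Dual ℝ V :=
  (-(sharp h hh u.2), h u.1)

section Module

variable {W : Type*} [AddCommGroup W] [Module ℝ W] {J : W →ₗ[ℝ] W}

theorem dualMap_dualMap_of_sq_eq_neg (hJ : ∀ X, J (J X) = -X) (ξ : Module.Dual ℝ W) :
    J.dualMap (J.dualMap ξ) = -ξ := by
  ext X
  simp [hJ]

theorem Jlam_Jlam {lam : ℝ} (hlam : lam * lam = 1) (hJ : ∀ X, J (J X) = -X)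
    (u : W × Module.Dual ℝ W) : Jlam lam J (Jlam lam J u) = -u := by
  simp [Prod.ext_iff, Jlam, hJ, smul_smul, hlam, dualMap_dualMap_of_sq_eq_neg hJ]

theorem bijective_of_sq_eq_neg (hJ : ∀ X, J (J X) = -X) : Function.Bijective J :=
  Function.bijective_iff_has_inverse.mpr ⟨fun X ↦ -J X, fun X ↦ by simp [hJ], fun X ↦ by simp [hJ]⟩

theorem LinearMap.BilinForm.Nondegenerate.comp_of_bijective {h : LinearMap.BilinForm ℝ W}
    (hh : h.Nondegenerate) (hJ : Function.Bijective J) : (h ∘ₗ J).Nondegenerate := by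
  refine ⟨fun X hX ↦ hJ.injective ?_, fun Y hY ↦ hh.2 Y fun X ↦ ?_⟩
  · simpa using hh.1 (J X) hX
  · obtain ⟨X, rfl⟩ := hJ.surjective X
    exact hY X

theorem flat_comp_eq_neg_smul_dualMap {h : LinearMap.BilinForm ℝ W} {ε : ℝ}
    (hJ : ∀ X, J (J X) = -X) (hcompat : ∀ X Y, h (J X) (J Y) = ε * h X Y) (X : W) :
    h (J X) = -(ε • J.dualMap (h X)) := by
  ext Y
  have := hcompat X (J Y)
  simp only [hJ, map_neg] at this
  simp [← this]

end Module

section Musical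

variable (h : LinearMap.BilinForm ℝ V) (hh : h.Nondegenerate)

theorem flat_sharp (ξ : Module.Dual ℝ V) : h (sharp h hh ξ) = ξ :=
  (h.toDual hh).apply_symm_apply ξ

theorem sharp_flat (X : V) : sharp h hh (h X) = X :=
  (h.toDual hh).symm_apply_apply X

theorem sharp_eq_iff {ξ : Module.Dual ℝ V} {X : V} : sharp h hh ξ = X ↔ ξ = h X :=
  (h.toDual hh).symm_apply_eq

theorem Jform_Jform (u : V × Module.Dual ℝ V) : Jform h hh (Jform h hh u) = -u := by
  simp [Prod.ext_iff, Jform, flat_sharp, sharp_flat]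

variable {h} {J : V →ₗ[ℝ] V}

theorem sharp_dualMap {lam : ℝ} (hlam : lam * lam = 1)
    (hflat : ∀ X, h (J X) = -(lam • J.dualMap (h X))) (ξ : Module.Dual ℝ V) :
    sharp h hh (J.dualMap ξ) = -(lam • J (sharp h hh ξ)) := by
  simp [sharp_eq_iff, hflat, flat_sharp, smul_smul, hlam]

theorem sharp_comp (hJ : ∀ X, J (J X) = -X) (hω : (h ∘ₗ J).Nondegenerate)
    (ξ : Module.Dual ℝ V) : sharp (h ∘ₗ J) hω ξ = -J (sharp h hh ξ) := by
  simp [sharp_eq_iff, hJ, flat_sharp]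

theorem Jlam_Jform_anticomm {lam : ℝ} (hlam : lam * lam = 1)
    (hflat : ∀ X, h (J X) = -(lam • J.dualMap (h X))) (u : V × Module.Dual ℝ V) :
    Jlam lam J (Jform h hh u) = -Jform h hh (Jlam lam J u) := by
  simp [Jlam, Jform, sharp_dualMap hh hlam hflat, hflat, smul_smul, hlam]

theorem Jform_Jform_comp_anticomm (hJ : ∀ X, J (J X) = -X) (hω : (h ∘ₗ J).Nondegenerate)
    (u : V × Module.Dual ℝ V) :
    Jform h hh (Jform (h ∘ₗ J) hω u) = -Jform (h ∘ₗ J) hω (Jform h hh u) := by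
  simp [Jform, sharp_comp hh hJ hω, sharp_flat]

theorem Jform_comp_eq_Jform_Jlam {lam : ℝ} (hlam : lam * lam = 1) (hJ : ∀ X, J (J X) = -X)
    (hflat : ∀ X, h (J X) = -(lam • J.dualMap (h X))) (hω : (h ∘ₗ J).Nondegenerate)
    (u : V × Module.Dual ℝ V) : Jform (h ∘ₗ J) hω u = Jform h hh (Jlam lam J u) := by
  simp [Jform, Jlam, sharp_comp hh hJ hω, sharp_dualMap hh hlam hflat, smul_smul, hlam]

end Musical

theorem generalized_almost_hypercomplex_general (g : LinearMap.BilinForm ℝ V)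
    (hg : LinearMap.BilinForm.Nondegenerate g)
    (ε : ℝ) (hε : ε = 1 ∨ ε = -1)
    (J : V →ₗ[ℝ] V) (hJ : ∀ X : V, J (J X) = -X)
    (hcompat : ∀ X Y : V, g (J X) (J Y) = ε * g X Y) :
    ∃ hω : LinearMap.BilinForm.Nondegenerate (g ∘ₗ J),
      (∀ u : V × Module.Dual ℝ V, Jlam ε J (Jlam ε J u) = -u) ∧
      (∀ u : V × Module.Dual ℝ V, Jform g hg (Jform g hg u) = -u) ∧
      (∀ u : V × Module.Dual ℝ V, Jform (g ∘ₗ J) hω (Jform (g ∘ₗ J) hω u) = -u) ∧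
      (∀ u : V × Module.Dual ℝ V, Jlam ε J (Jform g hg u) = -(Jform g hg (Jlam ε J u))) ∧
      (∀ u : V × Module.Dual ℝ V,
        Jlam ε J (Jform (g ∘ₗ J) hω u) = -(Jform (g ∘ₗ J) hω (Jlam ε J u))) ∧
      (∀ u : V × Module.Dual ℝ V,
        Jform g hg (Jform (g ∘ₗ J) hω u) = -(Jform (g ∘ₗ J) hω (Jform g hg u))) ∧
      (∀ u : V × Module.Dual ℝ V, Jform (g ∘ₗ J) hω u = Jform g hg (Jlam ε J u)) := by
  have hε2 : ε * ε = 1 := by rcases hε with rfl | rfl <;> norm_num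
  have hgJ := flat_comp_eq_neg_smul_dualMap hJ hcompat
  have hω := hg.comp_of_bijective (bijective_of_sq_eq_neg hJ)
  exact ⟨hω, Jlam_Jlam hε2 hJ, Jform_Jform g hg, Jform_Jform _ hω,
    Jlam_Jform_anticomm hg hε2 hgJ, Jlam_Jform_anticomm hω hε2 fun X ↦ hgJ (J X),
    Jform_Jform_comp_anticomm hg hJ hω, Jform_comp_eq_Jform_Jlam hg hε2 hJ hgJ hω⟩

/-- `(𝒥_{ε,J}, 𝒥_g, 𝒥_ω)` is a generalized almost hypercomplex structure: each factor
squares to `-id`, they pairwise anti-commute, and `𝒥_ω = 𝒥_g ∘ 𝒥_{ε,J}`. -/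
theorem generalized_almost_hypercomplex (g : LinearMap.BilinForm ℝ V)
    (hg : LinearMap.BilinForm.Nondegenerate g)
    (hsym : ∀ X Y : V, g X Y = g Y X) (ε : ℝ) (hε : ε = 1 ∨ ε = -1)
    (J : V →ₗ[ℝ] V) (hJ : ∀ X : V, J (J X) = -X)
    (hcompat : ∀ X Y : V, g (J X) (J Y) = ε * g X Y) :
    ∃ hω : LinearMap.BilinForm.Nondegenerate (g ∘ₗ J),
      (∀ u : V × Module.Dual ℝ V, Jlam ε J (Jlam ε J u) = -u) ∧
      (∀ u : V × Module.Dual ℝ V, Jform g hg (Jform g hg u) = -u) ∧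
      (∀ u : V × Module.Dual ℝ V, Jform (g ∘ₗ J) hω (Jform (g ∘ₗ J) hω u) = -u) ∧
      (∀ u : V × Module.Dual ℝ V, Jlam ε J (Jform g hg u) = -(Jform g hg (Jlam ε J u))) ∧
      (∀ u : V × Module.Dual ℝ V,
        Jlam ε J (Jform (g ∘ₗ J) hω u) = -(Jform (g ∘ₗ J) hω (Jlam ε J u))) ∧
      (∀ u : V × Module.Dual ℝ V,
        Jform g hg (Jform (g ∘ₗ J) hω u) = -(Jform (g ∘ₗ J) hω (Jform g hg u))) ∧
      (∀ u : V × Module.Dual ℝ V, Jform (g ∘ₗ J) hω u = Jform g hg (Jlam ε J u)) :=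
  generalized_almost_hypercomplex_general g hg ε hε J hJ hcompat

end
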